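/- Let C = {c_1,…,c_m} be candidate locations, E = {e_1,…,e_n} expert locations in a normed vector space, and ≻^k an inducible top-k ranking profile. Then the weighted directed graph G(C, E, ≻^k) has no negative-weight directed cycles: for every directed cycle j_1 → j_2 → … → j_T → j_{T+1} = j_1 in G(C, E, ≻^k), the sum of the edge weights Σ_{t=1}^{T} w(j_t, j_{t+1}) is nonnegative. -/

import Mathlib

open scoped Classical

section VotingDefs

variable {V : Type*} [NormedAddCommGroup V] [NormedSpace ℝ V]

/-- An expert with top-`k` ranking `pref : Fin k → Fin m` prefers candidate `j` to `j'`: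
`j` is ranked at some position `h`, and `j'` is either unranked or ranked strictly later. -/
def Prefers {k m : ℕ} (pref : Fin k → Fin m) (j j' : Fin m) : Prop :=
  ∃ h : Fin k, pref h = j ∧
    ((∀ h' : Fin k, pref h' ≠ j') ∨ ∃ h' : Fin k, pref h' = j' ∧ h < h')

/-- `q` is consistent with the profile `pref` of top-`k` rankings, given candidate
locations `c` and expert locations `e`. -/
def Consistent {n k m : ℕ} (c : Fin m → V) (e : Fin n → V)
    (pref : Fin n → Fin k → Fin m) (q : Fin m → ℝ) : Prop :=
  ∀ (i : Fin n) (j j' : Fin m), Prefers (pref i) j j' →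
    q j' - ‖e i - c j'‖ ≤ q j - ‖e i - c j‖

/-- Edge relation of the graph `G(C, E, ≻^k)`. -/
def HasEdge {n k m : ℕ} (pref : Fin n → Fin k → Fin m) (j j' : Fin m) : Prop :=
  ∃ i : Fin n, Prefers (pref i) j j'

/-- Weight of the edge `j → j'` in `G(C, E, ≻^k)`: the minimum of
`‖e i - c j'‖ - ‖e i - c j‖` over experts `i` preferring `j` to `j'`. -/
noncomputable def weightG {n k m : ℕ} (c : Fin m → V) (e : Fin n → V)
    (pref : Fin n → Fin k → Fin m) (j j' : Fin m) : ℝ :=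
  sInf {x : ℝ | ∃ i : Fin n, Prefers (pref i) j j' ∧ x = ‖e i - c j'‖ - ‖e i - c j‖}

/-- A directed walk along `edge` from `g` to `h`, recorded as its list of vertices. -/
def IsWalk {α : Type*} (edge : α → α → Prop) (l : List α) (g h : α) : Prop :=
  l.Chain' edge ∧ l.head? = some g ∧ l.getLast? = some h

/-- Total weight of a walk (sum of the weights of consecutive pairs). -/
noncomputable def walkWeight {α : Type*} (w : α → α → ℝ) (l : List α) : ℝ :=
  ((l.zip l.tail).map fun p => w p.1 p.2).sum

/-- Shortest directed path distance; `+∞` if there is no directed path. -/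
noncomputable def distG {α : Type*} (edge : α → α → Prop) (w : α → α → ℝ) (g h : α) : EReal :=
  sInf {x : EReal | ∃ l : List α, IsWalk edge l g h ∧ x = ((walkWeight w l : ℝ) : EReal)}

/-- Distance (number of edges) in an unweighted directed graph; `⊤` if unreachable. -/
noncomputable def hopDist {α : Type*} (edge : α → α → Prop) (g h : α) : ℕ∞ :=
  sInf {x : ℕ∞ | ∃ l : List α, IsWalk edge l g h ∧ x = ((l.length - 1 : ℕ) : ℕ∞)}

/-- `diam(G, S)`: the longest shortest-path length between two vertices of `S`. -/
noncomputable def diamS {α : Type*} (edge : α → α → Prop) (S : Set α) : ℕ∞ :=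
  ⨆ (u : α) (_ : u ∈ S) (v : α) (_ : v ∈ S), hopDist edge u v

/-- Edge relation of the unweighted graph `G(C, E, ≻^k)[δ]`. -/
def EdgeDelta {n k m : ℕ} (e : Fin n → V) (pref : Fin n → Fin k → Fin m) (δ : ℝ)
    (j j' : Fin m) : Prop :=
  ∃ i i' : Fin n, Prefers (pref i) j j' ∧ Prefers (pref i') j' j ∧ ‖e i - e i'‖ ≤ δ

/-- Minimum cardinality of an internal `δ`-cover of `Θ`; `⊤` if no finite cover exists. -/
noncomputable def coverNum (Θ : Set V) (δ : ℝ) : ℕ∞ :=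
  sInf {x : ℕ∞ | ∃ X : Finset V, ↑X ⊆ Θ ∧ (∀ θ ∈ Θ, ∃ v ∈ X, ‖θ - v‖ ≤ δ) ∧ x = (X.card : ℕ∞)}

end VotingDefs

/-! A vector `q` consistent with the profile is a potential for `G(C, E, ≻^k)`: every edge
weight `w(j, j')` is at least `q j' - q j`, so the weight of a closed walk is bounded below by
a telescoping sum of potential differences, which vanishes. -/

section Potential

variable {α : Type*} {edge : α → α → Prop} {w : α → α → ℝ}

theorem walkWeight_cons_cons (a b : α) (l : List α) :
    walkWeight w (a :: b :: l) = w a b + walkWeight w (b :: l) := by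
  simp [walkWeight]

theorem IsWalk.sub_le_walkWeight (q : α → ℝ) (hq : ∀ a b, edge a b → q b - q a ≤ w a b)
    {l : List α} {g h : α} (hl : IsWalk edge l g h) : q h - q g ≤ walkWeight w l := by
  induction l generalizing g with
  | nil => simp [IsWalk] at hl
  | cons a l ih =>
    obtain ⟨hchain, hhead, hlast⟩ := hl
    obtain rfl : a = g := by simpa using hhead
    cases l with
    | nil =>
      obtain rfl : a = h := by simpa using hlast
      simp [walkWeight]
    | cons b l =>
      rw [List.Chain', List.isChain_cons_cons] at hchain
      have htail : IsWalk edge (b :: l) b h := ⟨hchain.2, rfl, by simpa using hlast⟩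
      rw [walkWeight_cons_cons]
      linarith [hq a b hchain.1, ih htail]

theorem IsWalk.walkWeight_nonneg_of_potential (q : α → ℝ)
    (hq : ∀ a b, edge a b → q b - q a ≤ w a b) {l : List α} {g : α}
    (hl : IsWalk edge l g g) : 0 ≤ walkWeight w l := by
  simpa using hl.sub_le_walkWeight q hq

end Potential

theorem Consistent.sub_le_weightG {V : Type*} [NormedAddCommGroup V] [NormedSpace ℝ V]
    {n k m : ℕ} {c : Fin m → V} {e : Fin n → V} {pref : Fin n → Fin k → Fin m}
    {q : Fin m → ℝ} (hq : Consistent c e pref q) {j j' : Fin m} (hedge : HasEdge pref j j') :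
    q j' - q j ≤ weightG c e pref j j' := by
  obtain ⟨i, hi⟩ := hedge
  refine le_csInf ⟨_, i, hi, rfl⟩ ?_
  rintro _ ⟨i', hi', rfl⟩
  linarith [hq i' j j' hi']

theorem statement2_general {V : Type*} [NormedAddCommGroup V] [NormedSpace ℝ V]
    {n k m : ℕ} (c : Fin m → V) (e : Fin n → V) (pref : Fin n → Fin k → Fin m)
    (hind : ∃ q : Fin m → ℝ, Consistent c e pref q) :
    ∀ (j : Fin m) (l : List (Fin m)), 2 ≤ l.length →
      IsWalk (HasEdge pref) l j j →
      0 ≤ walkWeight (weightG c e pref) l := by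
  obtain ⟨q, hq⟩ := hind
  intro j l _ hwalk
  exact hwalk.walkWeight_nonneg_of_potential q fun _ _ => hq.sub_le_weightG

/-- For an inducible top-`k` profile, `G(C, E, ≻^k)` has no
negative-weight directed cycles: every closed directed walk (with at least one edge)
has nonnegative total weight. -/
theorem statement2 {V : Type*} [NormedAddCommGroup V] [NormedSpace ℝ V]
    {n k m : ℕ} (c : Fin m → V) (e : Fin n → V) (pref : Fin n → Fin k → Fin m)
    (hinj : ∀ i, Function.Injective (pref i))
    (hind : ∃ q : Fin m → ℝ, Consistent c e pref q) :
    ∀ (j : Fin m) (l : List (Fin m)), 2 ≤ l.length →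
      IsWalk (HasEdge pref) l j j →
      0 ≤ walkWeight (weightG c e pref) l :=
  statement2_general c e pref hind
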